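/- More generally, the quadratic rational Bézier arc construction centered at (x_0, y_0) with radius R traces points at distance exactly R from (x_0, y_0): ‖x(ξ) - (x_0, y_0)‖ = R for all ξ ∈ [0,1]. -/

import Mathlib

open Real

theorem stmt6 (x₀ y₀ R α₁ α₂ : ℝ) (hR : 0 < R) (hlt : α₁ < α₂) (hπ : α₂ - α₁ < π)
    (α : ℝ) (hα : α = (α₂ - α₁) / 2) (hα0 : 0 < α) (hα2 : α < π / 2)
    (center c₁ c₂ c₃ : EuclideanSpace ℝ (Fin 2))
    (hcen : center = ![x₀, y₀])
    (hc₁ : c₁ = ![x₀ + R * Real.cos α₁, y₀ + R * Real.sin α₁])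
    (hc₂ : c₂ = ![(x₀ + R * Real.cos α₁) - R * Real.tan α * Real.sin α₁,
                  (y₀ + R * Real.sin α₁) + R * Real.tan α * Real.cos α₁])
    (hc₃ : c₃ = ![x₀ + R * Real.cos α₂, y₀ + R * Real.sin α₂])
    (x : ℝ → EuclideanSpace ℝ (Fin 2))
    (hx : ∀ ξ, x ξ =
      (((1 - ξ) ^ 2 * 1 + 2 * ξ * (1 - ξ) * Real.cos α + ξ ^ 2 * 1)⁻¹) •
        (((1 - ξ) ^ 2 * 1) • c₁ + (2 * ξ * (1 - ξ) * Real.cos α) • c₂ +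
          (ξ ^ 2 * 1) • c₃)) :
    ∀ ξ ∈ Set.Icc (0 : ℝ) 1, ‖x ξ - center‖ = R := by
  intro ξ hξ
  obtain ⟨h0, h1⟩ := hξ
  have hc : 0 < Real.cos α := Real.cos_pos_of_mem_Ioo ⟨by linarith [Real.pi_pos], hα2⟩
  have hw : 0 < (1 - ξ) ^ 2 * 1 + 2 * ξ * (1 - ξ) * Real.cos α + ξ ^ 2 * 1 := by
    nlinarith [sq_nonneg (1 - ξ), sq_nonneg ξ, mul_nonneg (mul_nonneg h0 (by linarith : (0:ℝ) ≤ 1 - ξ)) hc.le, sq_nonneg (1 - 2*ξ)]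
  have hα₂ : α₂ = α₁ + 2 * α := by linarith
  have hs1 := Real.sin_sq_add_cos_sq α₁
  have hs2 := Real.sin_sq_add_cos_sq α
  have key :
      ((1-ξ)^2 * (R * Real.cos α₁ * Real.cos α)
        + 2*ξ*(1-ξ)*Real.cos α * (R * (Real.cos α₁ * Real.cos α - Real.sin α * Real.sin α₁))
        + ξ^2 * (R * (Real.cos α₁*(2*Real.cos α^2-1) - 2*Real.sin α₁*Real.sin α*Real.cos α) * Real.cos α))^2
      + ((1-ξ)^2 * (R * Real.sin α₁ * Real.cos α)
        + 2*ξ*(1-ξ)*Real.cos α * (R * (Real.sin α₁ * Real.cos α + Real.sin α * Real.cos α₁))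
        + ξ^2 * (R * (Real.sin α₁*(2*Real.cos α^2-1) + 2*Real.cos α₁*Real.sin α*Real.cos α) * Real.cos α))^2
      = R^2 * ((1 - ξ) ^ 2 * 1 + 2 * ξ * (1 - ξ) * Real.cos α + ξ ^ 2 * 1)^2 * Real.cos α ^ 2 := by
    linear_combination ((R ^ 2 * Real.cos α ^ 2) + (-4 * ξ * R ^ 2 * Real.cos α ^ 2) + (4 * ξ * R ^ 2 * Real.cos α ^ 3) + (4 * ξ ^ 2 * R ^ 2 * Real.cos α ^ 2) + (-12 * ξ ^ 2 * R ^ 2 * Real.cos α ^ 3) + (8 * ξ ^ 2 * R ^ 2 * Real.cos α ^ 4) + (4 * ξ ^ 2 * R ^ 2 * Real.sin α ^ 2 * Real.cos α ^ 2) + (8 * ξ ^ 3 * R ^ 2 * Real.cos α ^ 3) + (-16 * ξ ^ 3 * R ^ 2 * Real.cos α ^ 4) + (8 * ξ ^ 3 * R ^ 2 * Real.cos α ^ 5) + (-8 * ξ ^ 3 * R ^ 2 * Real.sin α ^ 2 * Real.cos α ^ 2) + (8 * ξ ^ 3 * R ^ 2 * Real.sin α ^ 2 * Real.cos α ^ 3)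 + (4 * ξ ^ 4 * R ^ 2 * Real.cos α ^ 4) + (-8 * ξ ^ 4 * R ^ 2 * Real.cos α ^ 5) + (4 * ξ ^ 4 * R ^ 2 * Real.cos α ^ 6) + (4 * ξ ^ 4 * R ^ 2 * Real.sin α ^ 2 * Real.cos α ^ 2) + (-8 * ξ ^ 4 * R ^ 2 * Real.sin α ^ 2 * Real.cos α ^ 3) + (4 * ξ ^ 4 * R ^ 2 * Real.sin α ^ 2 * Real.cos α ^ 4)) * hs1 + ((4 * ξ ^ 2 * R ^ 2 * Real.cos α ^ 2) + (-8 * ξ ^ 3 * R ^ 2 * Real.cos α ^ 2) + (8 * ξ ^ 3 * R ^ 2 * Real.cos α ^ 3) + (4 * ξ ^ 4 * R ^ 2 * Real.cos α ^ 2) + (-8 * ξ ^ 4 * R ^ 2 * Real.cos α ^ 3) + (4 * ξ ^ 4 * R ^ 2 * Real.cos α ^ 4)) * hs2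
  have hnorm : ‖x ξ - center‖ = Real.sqrt ((x ξ - center) 0 ^ 2 + (x ξ - center) 1 ^ 2) := by
    rw [EuclideanSpace.norm_eq]
    simp [Fin.sum_univ_two, sq_abs]
  rw [hnorm]
  have e0 : (x ξ - center) 0 =
      ((1-ξ)^2 * (R * Real.cos α₁ * Real.cos α)
        + 2*ξ*(1-ξ)*Real.cos α * (R * (Real.cos α₁ * Real.cos α - Real.sin α * Real.sin α₁))
        + ξ^2 * (R * (Real.cos α₁*(2*Real.cos α^2-1) - 2*Real.sin α₁*Real.sin α*Real.cos α) * Real.cos α))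
      / (((1 - ξ) ^ 2 * 1 + 2 * ξ * (1 - ξ) * Real.cos α + ξ ^ 2 * 1) * Real.cos α) := by
    simp only [hx, hc₁, hc₂, hc₃, hcen, PiLp.sub_apply, PiLp.smul_apply, PiLp.add_apply,
      Matrix.cons_val_zero, smul_eq_mul]
    rw [inv_mul_eq_div, div_sub' hw.ne', div_eq_div_iff hw.ne' (by positivity), hα₂]
    simp only [Real.cos_add, Real.sin_add, Real.cos_two_mul, Real.sin_two_mul,
      Real.tan_eq_sin_div_cos]
    field_simp
    ring
  have e1 : (x ξ - center) 1 =
      ((1-ξ)^2 * (R * Real.sin α₁ * Real.cos α)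
        + 2*ξ*(1-ξ)*Real.cos α * (R * (Real.sin α₁ * Real.cos α + Real.sin α * Real.cos α₁))
        + ξ^2 * (R * (Real.sin α₁*(2*Real.cos α^2-1) + 2*Real.cos α₁*Real.sin α*Real.cos α) * Real.cos α))
      / (((1 - ξ) ^ 2 * 1 + 2 * ξ * (1 - ξ) * Real.cos α + ξ ^ 2 * 1) * Real.cos α) := by
    simp only [hx, hc₁, hc₂, hc₃, hcen, PiLp.sub_apply, PiLp.smul_apply, PiLp.add_apply,
      Matrix.cons_val_one, Matrix.head_cons, Matrix.cons_val_zero, smul_eq_mul]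
    rw [inv_mul_eq_div, div_sub' hw.ne', div_eq_div_iff hw.ne' (by positivity), hα₂]
    simp only [Real.cos_add, Real.sin_add, Real.cos_two_mul, Real.sin_two_mul,
      Real.tan_eq_sin_div_cos]
    field_simp
    ring
  rw [e0, e1, div_pow, div_pow, ← add_div, key]
  rw [show R^2 * ((1 - ξ) ^ 2 * 1 + 2 * ξ * (1 - ξ) * Real.cos α + ξ ^ 2 * 1)^2 * Real.cos α ^ 2
      / (((1 - ξ) ^ 2 * 1 + 2 * ξ * (1 - ξ) * Real.cos α + ξ ^ 2 * 1) * Real.cos α)^2 = R^2 by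
    rw [div_eq_iff (by positivity)]
    ring]
  exact Real.sqrt_sq hR.le
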